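/- arXiv:1308.2338 — 2 statements merged into one kernel-verified Lean document; each statement's English description precedes it below -/
import Mathlib

section
/- If B is exponentially distributed with rate λ > 0, then for every integer l, the probability that the binary digit of B at position l equals 1, i.e. Pr{⌊B/2^l⌋ is odd}, equals 1/(1 + e^{λ 2^l}). -/
/-!
With `c = 2 ^ l` and `q = exp (-λ c)`, the digit is `1` on `[0, ∞)` exactly on the intervals
`[(2k+1) c, (2k+2) c)`, whose exponential masses `q ^ (2k+1) - q ^ (2k+2)` form a geometric
series with sum `q / (1 + q) = 1 / (1 + exp (λ c))`.
-/

open MeasureTheory ProbabilityTheory Real Set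

lemma setOf_floor_div_eq_Ico {c : ℝ} (hc : 0 < c) (n : ℤ) :
    {x : ℝ | ⌊x / c⌋ = n} = Ico (n * c) ((n + 1) * c) := by
  ext x
  simp only [mem_ofPred_eq, mem_Ico, Int.floor_eq_iff, le_div_iff₀ hc, div_lt_iff₀ hc]

lemma setOf_odd_floor_div_inter_Ici {c : ℝ} (hc : 0 < c) :
    {x : ℝ | Odd ⌊x / c⌋} ∩ Ici 0 = ⋃ k : ℕ, {x : ℝ | ⌊x / c⌋ = (2 * k + 1 : ℕ)} := by
  ext x
  simp only [mem_inter_iff, mem_ofPred_eq, mem_Ici, mem_iUnion]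
  have hfloor : 0 ≤ ⌊x / c⌋ ↔ 0 ≤ x := by rw [Int.floor_nonneg, le_div_iff₀ hc, zero_mul]
  constructor
  · rintro ⟨⟨m, hm⟩, hx⟩
    lift m to ℕ using by have := hfloor.mpr hx; omega
    exact ⟨m, by push_cast; exact hm⟩
  · rintro ⟨k, hk⟩
    exact ⟨⟨k, by rw [hk]; push_cast; ring⟩, hfloor.mp (by rw [hk]; positivity)⟩

lemma hasSum_pow_odd_sub_pow_even {q : ℝ} (hq : |q| < 1) :
    HasSum (fun k : ℕ => q ^ (2 * k + 1) - q ^ (2 * k + 2)) (q / (1 + q)) := by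
  have hq2 : |q ^ 2| < 1 := by rw [abs_pow]; exact pow_lt_one₀ (abs_nonneg q) hq two_ne_zero
  have h1q : 1 + q ≠ 0 := by linarith [neg_abs_le q]
  have h1q2 : 1 - q ^ 2 ≠ 0 := by nlinarith [abs_nonneg q, sq_abs q]
  have hterm : (fun k : ℕ => q ^ (2 * k + 1) - q ^ (2 * k + 2)) =
      fun k => (q - q ^ 2) * (q ^ 2) ^ k := funext fun k => by ring
  have hsum : q / (1 + q) = (q - q ^ 2) * (1 - q ^ 2)⁻¹ := by
    field_simp; ring
  rw [hterm, hsum]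
  exact (hasSum_geometric_of_abs_lt_one hq2).mul_left _

namespace ProbabilityTheory

lemma expMeasure_Iio_zero (r : ℝ) : expMeasure r (Iio 0) = 0 := by
  rw [expMeasure, gammaMeasure, withDensity_apply _ measurableSet_Iio]
  exact lintegral_exponentialPDF_of_nonpos le_rfl

instance nullSingletonClass_expMeasure (r : ℝ) : NullSingletonClass (expMeasure r) :=
  nullSingletonClass_withDensity _

lemma expMeasure_Ico {r a b : ℝ} (hr : 0 < r) (ha : 0 ≤ a) (hab : a ≤ b) :
    expMeasure r (Ico a b) = ENNReal.ofReal (exp (-(r * a)) - exp (-(r * b))) := by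
  have := isProbabilityMeasure_expMeasure hr
  rw [measure_congr Ico_ae_eq_Ioc, ← measure_cdf (expMeasure r), StieltjesFunction.measure_Ioc,
    cdf_expMeasure_eq hr, cdf_expMeasure_eq hr, if_pos (ha.trans hab), if_pos ha,
    sub_sub_sub_cancel_left]

lemma expMeasure_setOf_floor_div_eq {r c : ℝ} (hr : 0 < r) (hc : 0 < c) (n : ℕ) :
    expMeasure r {x | ⌊x / c⌋ = n} =
      ENNReal.ofReal (exp (-(r * c)) ^ n - exp (-(r * c)) ^ (n + 1)) := by
  rw [setOf_floor_div_eq_Ico hc, expMeasure_Ico hr (by positivity) (by gcongr; simp),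
    ← exp_nat_mul, ← exp_nat_mul]
  push_cast
  ring_nf

lemma expMeasure_setOf_odd_floor_div {r c : ℝ} (hr : 0 < r) (hc : 0 < c) :
    expMeasure r {x | Odd ⌊x / c⌋} = ENNReal.ofReal (1 / (1 + exp (r * c))) := by
  set q := exp (-(r * c)) with hq
  have hq0 : 0 < q := exp_pos _
  have hq1 : q < 1 := exp_lt_one_iff.mpr (by nlinarith)
  have hnull : expMeasure r (Ici 0)ᶜ = 0 := by rw [compl_Ici]; exact expMeasure_Iio_zero r
  have hdisj : Pairwise (Function.onFun Disjoint
      fun k : ℕ => {x : ℝ | ⌊x / c⌋ = (2 * k + 1 : ℕ)}) :=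
    fun i j hij => disjoint_left.mpr fun x hi hj => hij (by simp_all)
  have hmeas (n : ℤ) : MeasurableSet {x : ℝ | ⌊x / c⌋ = n} := by
    rw [setOf_floor_div_eq_Ico hc]; exact measurableSet_Ico
  have hsum := hasSum_pow_odd_sub_pow_even (abs_lt.mpr ⟨by linarith, hq1⟩)
  have hnn (k : ℕ) : 0 ≤ q ^ (2 * k + 1) - q ^ (2 * k + 2) :=
    sub_nonneg.mpr (pow_le_pow_of_le_one hq0.le hq1.le (by omega))
  calc expMeasure r {x | Odd ⌊x / c⌋}
      = expMeasure r ({x | Odd ⌊x / c⌋} ∩ Ici 0) := (measure_inter_conull hnull).symm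
    _ = ∑' k : ℕ, expMeasure r {x : ℝ | ⌊x / c⌋ = (2 * k + 1 : ℕ)} := by
      rw [setOf_odd_floor_div_inter_Ici hc, measure_iUnion hdisj fun k => hmeas _]
    _ = ENNReal.ofReal (q / (1 + q)) := by
      simp_rw [expMeasure_setOf_floor_div_eq hr hc]
      rw [← ENNReal.ofReal_tsum_of_nonneg hnn hsum.summable, hsum.tsum_eq]
    _ = ENNReal.ofReal (1 / (1 + exp (r * c))) := by
      rw [hq, exp_neg]; field_simp; rw [add_comm]

end ProbabilityTheory

theorem exponential_binary_digit_prob_general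
    {Ω : Type*} [MeasurableSpace Ω] (P : Measure Ω)
    (lam : ℝ) (hlam : 0 < lam) (B : Ω → ℝ) (hB : Measurable B)
    (hdist : P.map B = ProbabilityTheory.expMeasure lam) (l : ℤ) :
    P {ω | Odd ⌊B ω / 2 ^ l⌋} =
      ENNReal.ofReal (1 / (1 + Real.exp (lam * 2 ^ l))) := by
  have hS : MeasurableSet {x : ℝ | Odd ⌊x / 2 ^ l⌋} :=
    Int.measurable_floor.comp (measurable_id.div_const _)
      (MeasurableSet.of_discrete (s := {n | Odd n}))
  rw [← expMeasure_setOf_odd_floor_div hlam (zpow_pos two_pos l), ← hdist,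
    Measure.map_apply hB hS]
  rfl

theorem exponential_binary_digit_prob
    {Ω : Type*} [MeasurableSpace Ω] (P : Measure Ω) [IsProbabilityMeasure P]
    (lam : ℝ) (hlam : 0 < lam) (B : Ω → ℝ) (hB : Measurable B)
    (hdist : P.map B = ProbabilityTheory.expMeasure lam) (l : ℤ) :
    P {ω | Odd ⌊B ω / 2 ^ l⌋} =
      ENNReal.ofReal (1 / (1 + Real.exp (lam * 2 ^ l))) :=
  exponential_binary_digit_prob_general P lam hlam B hB hdist l
end

section
/- For 0 < d ≤ p < 1/2, the quantity H(d) - (1-p+d)·H(d/(1-p+d)) equals (1-p)log(1-p) - (1-d)log(1-d) - (1-p+d)log(1-p+d), and satisfies H(d) - (1-p+d)H(d/(1-p+d)) ≤ (p - d)(log e - log(1-p)) ≤ 2(log e)(p - d). -/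
open Real

/-- Binary entropy in bits. -/
noncomputable def H2 (p : ℝ) : ℝ :=
  -(p * Real.logb 2 p) - (1 - p) * Real.logb 2 (1 - p)

theorem zChannel_entropy_gap_bound (p d : ℝ) (hd : 0 < d) (hdp : d ≤ p) (hp : p < 1 / 2) :
    (H2 d - (1 - p + d) * H2 (d / (1 - p + d)) =
      (1 - p) * Real.logb 2 (1 - p) - (1 - d) * Real.logb 2 (1 - d)
        - (1 - p + d) * Real.logb 2 (1 - p + d)) ∧
    H2 d - (1 - p + d) * H2 (d / (1 - p + d)) ≤
      (p - d) * (Real.logb 2 (Real.exp 1) - Real.logb 2 (1 - p)) ∧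
    (p - d) * (Real.logb 2 (Real.exp 1) - Real.logb 2 (1 - p)) ≤
      2 * Real.logb 2 (Real.exp 1) * (p - d) := by
  have hs : (0:ℝ) < 1 - p + d := by linarith
  have hp1 : (0:ℝ) < 1 - p := by linarith
  have hd1 : (0:ℝ) < 1 - d := by linarith
  have hlog2 : (0:ℝ) < Real.log 2 := Real.log_pos (by norm_num)
  have hfrac : 1 - d / (1 - p + d) = (1 - p) / (1 - p + d) := by
    field_simp
    ring
  have eq1 : H2 d - (1 - p + d) * H2 (d / (1 - p + d)) =
      (1 - p) * Real.logb 2 (1 - p) - (1 - d) * Real.logb 2 (1 - d)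
        - (1 - p + d) * Real.logb 2 (1 - p + d) := by
    simp only [H2, hfrac, Real.logb, Real.log_div hd.ne' hs.ne',
      Real.log_div hp1.ne' hs.ne']
    field_simp
    ring
  refine ⟨eq1, ?_, ?_⟩
  · -- main inequality
    have key : (1 - p) * Real.log (1 - p) - (1 - d) * Real.log (1 - d)
        - (1 - p + d) * Real.log (1 - p + d) ≤ (p - d) * (1 - Real.log (1 - p)) := by
      -- log x ≤ x - 1 twice
      have h1 : Real.log ((1 - p) / (1 - d)) ≤ (1 - p) / (1 - d) - 1 :=
        Real.log_le_sub_one_of_pos (by positivity)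
      have h1' : Real.log (1 - p) - Real.log (1 - d) ≤ (1 - p) / (1 - d) - 1 := by
        rwa [Real.log_div hp1.ne' hd1.ne'] at h1
      have h1'' : (1 - d) * Real.log (1 - p) - (1 - d) * Real.log (1 - d) ≤
          (1 - p) - (1 - d) := by
        have := mul_le_mul_of_nonneg_left h1' hd1.le
        have hne : (1 - d) ≠ 0 := hd1.ne'
        calc (1 - d) * Real.log (1 - p) - (1 - d) * Real.log (1 - d)
            = (1 - d) * (Real.log (1 - p) - Real.log (1 - d)) := by ring
          _ ≤ (1 - d) * ((1 - p) / (1 - d) - 1) := this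
          _ = (1 - p) - (1 - d) := by field_simp
      have h2 : Real.log (1 / (1 - p + d)) ≤ 1 / (1 - p + d) - 1 :=
        Real.log_le_sub_one_of_pos (by positivity)
      have h2' : -Real.log (1 - p + d) ≤ (p - d) / (1 - p + d) := by
        rw [Real.log_div one_ne_zero hs.ne', Real.log_one] at h2
        have : (1:ℝ) / (1 - p + d) - 1 = (p - d) / (1 - p + d) := by field_simp; ring
        linarith [this ▸ h2]
      have h2'' : -(1 - p + d) * Real.log (1 - p + d) ≤ p - d := by
        have := mul_le_mul_of_nonneg_left h2' hs.le
        have : (1 - p + d) * ((p - d) / (1 - p + d)) = p - d := by field_simp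
        nlinarith [mul_le_mul_of_nonneg_left h2' hs.le]
      have hlp : Real.log (1 - p) ≤ Real.log (1 - d) :=
        Real.log_le_log hp1 (by linarith)
      nlinarith [hlp, h1'', h2'']
    rw [eq1]
    simp only [Real.logb, Real.log_exp]
    rw [show (1 - p) * (Real.log (1 - p) / Real.log 2) - (1 - d) * (Real.log (1 - d) / Real.log 2)
        - (1 - p + d) * (Real.log (1 - p + d) / Real.log 2)
        = ((1 - p) * Real.log (1 - p) - (1 - d) * Real.log (1 - d)
          - (1 - p + d) * Real.log (1 - p + d)) / Real.log 2 from by ring,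
      show (p - d) * (1 / Real.log 2 - Real.log (1 - p) / Real.log 2)
        = ((p - d) * (1 - Real.log (1 - p))) / Real.log 2 from by ring]
    exact div_le_div_of_nonneg_right key hlog2.le
  · -- second inequality: need log(1-p) ≥ -1
    have hlp : Real.log (1/2) ≤ Real.log (1 - p) :=
      Real.log_le_log (by norm_num) (by linarith)
    have hhalf : Real.log (1/2 : ℝ) = -Real.log 2 := by
      rw [Real.log_div one_ne_zero (by norm_num), Real.log_one]; ring
    have hl2 : Real.log 2 < 1 := by
      have := Real.log_two_lt_d9; linarith
    have hlpm : -1 ≤ Real.log (1 - p) := by rw [hhalf] at hlp; linarith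
    simp only [Real.logb, Real.log_exp]
    have hpd : 0 ≤ p - d := by linarith
    rw [show (p - d) * (1 / Real.log 2 - Real.log (1 - p) / Real.log 2)
        = ((p - d) * (1 - Real.log (1 - p))) / Real.log 2 from by ring,
      show 2 * (1 / Real.log 2) * (p - d) = (2 * (p - d)) / Real.log 2 from by ring]
    apply div_le_div_of_nonneg_right _ hlog2.le
    nlinarith [hlpm, hpd]
end
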